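/- arXiv:math/0609509 — 2 statements merged into one kernel-verified Lean document; each statement's English description precedes it below -/
import Mathlib

section
/- Let A be a commutative ℚ-algebra, let ℏ ∈ A be a unit, let z ∈ A be nilpotent, let c : Fin n → A, and set p := ∏_{i} (z − c i). Assume z · p = 0. Then for every integer m ≥ 1 the element z + m·ℏ is a unit in A, and in the formal power series ring A[[q]] one has the identity p · ∑_{d ≥ 0} (∏_{m=1}^{d} (z + m·ℏ))⁻¹ q^d = p · ∑_{d ≥ 0} (d!·ℏ^d)⁻¹ q^d. -/
/-! Since `z * p = 0`, multiplication by `p` cannot see `z`: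
`p * ∏ (z + mℏ) = p * ∏ mℏ = p * d! ℏ^d`, so the two series agree coefficientwise after
multiplying by `p`. The factors `z + mℏ` are units because `mℏ` is a unit (as `m` is invertible in a `ℚ`-algebra) and `z` is nilpotent. -/

open Finset Nat

theorem isUnit_intCast_of_ne_zero {A : Type*} [Ring A] [Algebra ℚ A] {m : ℤ} (hm : m ≠ 0) :
    IsUnit (m : A) := by
  rw [← map_intCast (algebraMap ℚ A)]
  exact (IsUnit.mk0 _ (Int.cast_ne_zero.mpr hm)).map _

theorem isUnit_natCast_of_ne_zero {A : Type*} [Semiring A] [Algebra ℚ A] {m : ℕ}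
    (hm : m ≠ 0) : IsUnit (m : A) := by
  rw [← map_natCast (algebraMap ℚ A)]
  exact (IsUnit.mk0 _ (Nat.cast_ne_zero.mpr hm)).map _

theorem IsNilpotent.isUnit_add_intCast_mul {A : Type*} [CommRing A] [Algebra ℚ A] {z ℏ : A}
    (hz : IsNilpotent z) (hℏ : IsUnit ℏ) {m : ℤ} (hm : m ≠ 0) : IsUnit (z + m * ℏ) :=
  hz.isUnit_add_right_of_commute ((isUnit_intCast_of_ne_zero hm).mul hℏ) (Commute.all _ _)

theorem mul_prod_add_of_mul_eq_zero {A ι : Type*} [CommSemiring A] {p z : A} (h : p * z = 0)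
    (s : Finset ι) (f : ι → A) : p * ∏ i ∈ s, (z + f i) = p * ∏ i ∈ s, f i := by
  classical
  induction s using Finset.induction with
  | empty => simp
  | insert a s ha ih =>
    rw [prod_insert ha, prod_insert ha, ← mul_assoc, mul_add, h, zero_add, mul_assoc,
      mul_left_comm, ih, mul_left_comm]

theorem prod_Icc_natCast_mul {A : Type*} [CommSemiring A] (ℏ : A) (d : ℕ) :
    ∏ m ∈ Icc 1 d, (m : A) * ℏ = d ! * ℏ ^ d := by
  rw [prod_mul_distrib, prod_const, Nat.card_Icc, Nat.add_sub_cancel, ← Nat.cast_prod,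
    ← Ico_add_one_right_eq_Icc, prod_Ico_id_eq_factorial]

theorem Ring.mul_inverse_eq_of_mul_eq {M : Type*} [CommMonoidWithZero M] {p a b : M}
    (ha : IsUnit a) (hb : IsUnit b) (h : p * a = p * b) :
    p * Ring.inverse a = p * Ring.inverse b := by
  calc p * Ring.inverse a = p * b * Ring.inverse b * Ring.inverse a := by
        rw [mul_assoc p, Ring.mul_inverse_cancel _ hb, mul_one]
    _ = p * a * Ring.inverse a * Ring.inverse b := by rw [← h, mul_right_comm]
    _ = p * Ring.inverse b := by rw [mul_assoc p, Ring.mul_inverse_cancel _ ha, mul_one]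

theorem stmt3_general (A : Type*) [CommRing A] [Algebra ℚ A] (ℏ : A) (hℏ : IsUnit ℏ)
    (z : A) (hz : IsNilpotent z)
    (p : A) (hzp : z * p = 0) :
    (∀ m : ℤ, 1 ≤ m → IsUnit (z + (m : A) * ℏ)) ∧
      (PowerSeries.C (R := A) p) *
          PowerSeries.mk (fun d =>
            Ring.inverse (∏ m ∈ Finset.Icc 1 d, (z + (m : A) * ℏ))) =
        (PowerSeries.C (R := A) p) *
          PowerSeries.mk (fun d => Ring.inverse ((d.factorial : A) * ℏ ^ d)) := by
  have hunit (m : ℤ) (hm : 1 ≤ m) : IsUnit (z + (m : A) * ℏ) :=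
    hz.isUnit_add_intCast_mul hℏ (by omega)
  refine ⟨hunit, ?_⟩
  ext d
  simp only [PowerSeries.coeff_C_mul, PowerSeries.coeff_mk]
  refine Ring.mul_inverse_eq_of_mul_eq ?_ ((isUnit_natCast_of_ne_zero d.factorial_ne_zero).mul
    (hℏ.pow d)) ?_
  · refine IsUnit.prod_iff.mpr fun m hm => ?_
    exact_mod_cast hunit m (by exact_mod_cast (mem_Icc.mp hm).1)
  · rw [mul_prod_add_of_mul_eq_zero (by rw [mul_comm, hzp]), prod_Icc_natCast_mul]

/-- Core computation in the consistency check with the Quantum Hyperplane Section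
Principle: with `ℏ` a unit, `z` nilpotent and `z · ∏ᵢ (z − cᵢ) = 0`, each
`z + mℏ` (`m ≥ 1`) is a unit, and modulo multiplication by `p = ∏ᵢ (z − cᵢ)`
the series `∑_d q^d / ∏_{m=1}^d (z + mℏ)` collapses to
`∑_d q^d / (d! ℏ^d)`, i.e. to `exp(q/ℏ)`. -/
theorem stmt3 (A : Type*) [CommRing A] [Algebra ℚ A] (ℏ : A) (hℏ : IsUnit ℏ)
    (z : A) (hz : IsNilpotent z) (n : ℕ) (c : Fin n → A)
    (p : A) (hp : p = ∏ i, (z - c i)) (hzp : z * p = 0) :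
    (∀ m : ℤ, 1 ≤ m → IsUnit (z + (m : A) * ℏ)) ∧
      (PowerSeries.C (R := A) p) *
          PowerSeries.mk (fun d =>
            Ring.inverse (∏ m ∈ Finset.Icc 1 d, (z + (m : A) * ℏ))) =
        (PowerSeries.C (R := A) p) *
          PowerSeries.mk (fun d => Ring.inverse ((d.factorial : A) * ℏ ^ d)) :=
  stmt3_general A ℏ hℏ z hz p hzp
end

section
/- Let F := ℚ(X₀, X₁, ..., X_n, ℏ) be the field of fractions of the polynomial ring over ℚ in the n+2 indeterminates X₀,...,X_n, ℏ, let R := F[H]/(∏_{i=0}^{n} (H − X_i)), and for ν ≥ 1 let u_ν ∈ R be the image of ∏_{i=0}^{n} (H − X_i + ν·ℏ). Then there exists exactly one sequence a : ℕ → R with a 0 = 1 and u_ν · (a ν) = a (ν−1) for all ν ≥ 1, and this sequence satisfies (∏_{m=1}^{ν} u_m) · (a ν) = 1 for every ν ≥ 0. -/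
set_option maxHeartbeats 1000000
set_option synthInstance.maxHeartbeats 400000


/-! The field `F = ℚ(X₀,…,X_n,ℏ)`, the small equivariant quantum cohomology ring
`R = F[H]/(∏ᵢ (H − Xᵢ))` of `ℙⁿ`, and the recursion coming from the quantum
differential equation. We realize `F` as the fraction field of the multivariate
polynomial ring in `n + 2` indeterminates, where the first `n + 1` variables
are `X₀,…,X_n` and the last one is `ℏ`. -/

/-- The field `ℚ(X₀,…,X_n,ℏ)`. -/
noncomputable abbrev FField (n : ℕ) : Type :=
  FractionRing (MvPolynomial (Fin (n + 2)) ℚ)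

/-- The indeterminate `Xᵢ` viewed in `ℚ(X₀,…,X_n,ℏ)`. -/
noncomputable abbrev Xvar (n : ℕ) (i : Fin (n + 1)) : FField n :=
  algebraMap (MvPolynomial (Fin (n + 2)) ℚ) (FField n) (MvPolynomial.X i.castSucc)

/-- The indeterminate `ℏ` viewed in `ℚ(X₀,…,X_n,ℏ)`. -/
noncomputable abbrev hbar (n : ℕ) : FField n :=
  algebraMap (MvPolynomial (Fin (n + 2)) ℚ) (FField n) (MvPolynomial.X (Fin.last (n + 1)))

/-- The ring `R = ℚ(X₀,…,X_n,ℏ)[H]/(∏ᵢ₌₀ⁿ (H − Xᵢ))`, the small equivariant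
quantum cohomology ring of `ℙⁿ`. -/
noncomputable abbrev Requiv (n : ℕ) : Type :=
  Polynomial (FField n) ⧸
    Ideal.span {∏ i : Fin (n + 1), (Polynomial.X - Polynomial.C (Xvar n i))}

/-- For `ν : ℕ`, the image `u_ν` of `∏ᵢ₌₀ⁿ (H − Xᵢ + νℏ)` in `R`. -/
noncomputable abbrev uElt (n ν : ℕ) : Requiv n :=
  Ideal.Quotient.mk _
    (∏ i : Fin (n + 1),
      (Polynomial.X - Polynomial.C (Xvar n i) + Polynomial.C ((ν : FField n) * hbar n)))


section Aux
open Polynomial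

lemma coprime_linear {F : Type*} [Field F] {a b : F} (h : a ≠ b) :
    IsCoprime (X - C a : F[X]) (X - C b) := by
  refine ⟨C (b - a)⁻¹, -C (b - a)⁻¹, ?_⟩
  have hb : b - a ≠ 0 := sub_ne_zero.mpr h.symm
  have h1 : C (b-a)⁻¹ * (X - C a) + (-C (b-a)⁻¹) * (X - C b)
      = C (b-a)⁻¹ * C (b - a) := by rw [C_sub]; ring
  rw [h1, ← C_mul, inv_mul_cancel₀ hb, C_1]

lemma Xvar_ne (n : ℕ) (ν : ℕ) (hν : 1 ≤ ν) (i j : Fin (n + 1)) :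
    Xvar n i ≠ Xvar n j - (ν : FField n) * hbar n := by
  intro h
  set φ := algebraMap (MvPolynomial (Fin (n + 2)) ℚ) (FField n) with hφ
  have h' : φ (MvPolynomial.X i.castSucc - MvPolynomial.X j.castSucc
      + (ν : MvPolynomial (Fin (n+2)) ℚ) * MvPolynomial.X (Fin.last (n+1))) = 0 := by
    rw [map_add, map_sub, map_mul, map_natCast]
    have hi : φ (MvPolynomial.X i.castSucc) = Xvar n i := rfl
    have hj : φ (MvPolynomial.X j.castSucc) = Xvar n j := rfl
    have hl : φ (MvPolynomial.X (Fin.last (n+1))) = hbar n := rfl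
    rw [hi, hj, hl, h]; ring
  have h0 : (MvPolynomial.X i.castSucc - MvPolynomial.X j.castSucc
      + (ν : MvPolynomial (Fin (n+2)) ℚ) * MvPolynomial.X (Fin.last (n+1))) = 0 :=
    IsFractionRing.injective (MvPolynomial (Fin (n + 2)) ℚ) (FField n)
      (by rw [map_zero]; exact h')
  have hne : (i.castSucc : Fin (n+2)) ≠ Fin.last (n+1) := Fin.ne_of_lt (Fin.castSucc_lt_last _)
  have hne' : (j.castSucc : Fin (n+2)) ≠ Fin.last (n+1) := Fin.ne_of_lt (Fin.castSucc_lt_last _)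
  have := congrArg (MvPolynomial.eval
    (fun k => if k = Fin.last (n+1) then (1:ℚ) else 0)) h0
  simp [hne, hne'] at this
  omega

lemma isCoprime_pq (n ν : ℕ) (hν : 1 ≤ ν) :
    IsCoprime (∏ i : Fin (n + 1), (X - C (Xvar n i)))
      (∏ i : Fin (n + 1), (X - C (Xvar n i) + C ((ν : FField n) * hbar n))) := by
  apply IsCoprime.prod_left
  intro i _
  apply IsCoprime.prod_right
  intro j _
  have hq : (X - C (Xvar n j) + C ((ν : FField n) * hbar n))
      = X - C (Xvar n j - (ν : FField n) * hbar n) := by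
    rw [C_sub]; ring
  rw [hq]
  exact coprime_linear (Xvar_ne n ν hν i j)

lemma uElt_inv (n ν : ℕ) (hν : 1 ≤ ν) : ∃ b : Requiv n, uElt n ν * b = 1 := by
  obtain ⟨u, v, huv⟩ := isCoprime_pq n ν hν
  refine ⟨Ideal.Quotient.mk _ v, ?_⟩
  have hqv : (∏ i : Fin (n + 1), (X - C (Xvar n i) + C ((ν : FField n) * hbar n))) * v - 1
      ∈ Ideal.span {∏ i : Fin (n + 1), (X - C (Xvar n i) : (FField n)[X])} := by
    have h2 : (∏ i : Fin (n + 1), (X - C (Xvar n i) + C ((ν : FField n) * hbar n))) * v - 1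
        = (-u) * ∏ i : Fin (n + 1), (X - C (Xvar n i)) := by linear_combination huv
    rw [h2]
    exact Ideal.mul_mem_left _ _ (Ideal.subset_span rfl)
  calc uElt n ν * Ideal.Quotient.mk _ v
      = Ideal.Quotient.mk _
          ((∏ i : Fin (n + 1), (X - C (Xvar n i) + C ((ν : FField n) * hbar n))) * v) :=
        (map_mul _ _ _).symm
    _ = Ideal.Quotient.mk _ 1 := Ideal.Quotient.eq.mpr hqv
    _ = 1 := map_one _

/-- abstract form over any commutative ring -/
lemma abstract_rec {R : Type*} [CommRing R] (u : ℕ → R)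
    (hinv : ∀ ν : ℕ, 1 ≤ ν → ∃ b : R, u ν * b = 1) :
    (∃! a : ℕ → R,
      a 0 = 1 ∧ ∀ ν : ℕ, 1 ≤ ν → u ν * a ν = a (ν - 1)) ∧
    (∀ a : ℕ → R,
      (a 0 = 1 ∧ ∀ ν : ℕ, 1 ≤ ν → u ν * a ν = a (ν - 1)) →
      ∀ ν : ℕ, (∏ m ∈ Finset.Icc 1 ν, u m) * a ν = 1) := by
  have hb : ∀ ν : ℕ, ∃ b : R, u (ν + 1) * b = 1 := fun ν =>
    hinv (ν + 1) (Nat.le_add_left 1 ν)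
  choose b hbspec using hb
  set a0 : ℕ → R := fun ν => Nat.rec 1 (fun k ak => b k * ak) ν with ha0
  have ha00 : a0 0 = 1 := rfl
  have ha0rec : ∀ ν : ℕ, 1 ≤ ν → u ν * a0 ν = a0 (ν - 1) := by
    intro ν hν
    cases ν with
    | zero => omega
    | succ k =>
      have h1 : a0 (k + 1) = b k * a0 k := rfl
      have h2 : k + 1 - 1 = k := by omega
      rw [h1, h2, ← mul_assoc, hbspec k, one_mul]
  have prodid : ∀ a : ℕ → R,
      (a 0 = 1 ∧ ∀ ν : ℕ, 1 ≤ ν → u ν * a ν = a (ν - 1)) →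
      ∀ ν : ℕ, (∏ m ∈ Finset.Icc 1 ν, u m) * a ν = 1 := by
    rintro a ⟨h0, hrec⟩ ν
    induction ν with
    | zero =>
      rw [show Finset.Icc 1 0 = ∅ from Finset.Icc_eq_empty (by omega),
        Finset.prod_empty, one_mul, h0]
    | succ k ih =>
      have hk : k + 1 - 1 = k := by omega
      rw [Finset.prod_Icc_succ_top (Nat.le_add_left 1 k), mul_assoc,
        hrec (k + 1) (Nat.le_add_left 1 k), hk, ih]
  refine ⟨⟨a0, ⟨ha00, ha0rec⟩, ?_⟩, prodid⟩
  rintro a ⟨h0, hrec⟩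
  funext ν
  have h1 := prodid a ⟨h0, hrec⟩ ν
  have h2 := prodid a0 ⟨ha00, ha0rec⟩ ν
  calc a ν = a ν * ((∏ m ∈ Finset.Icc 1 ν, u m) * a0 ν) := by rw [h2, mul_one]
    _ = ((∏ m ∈ Finset.Icc 1 ν, u m) * a ν) * a0 ν := by ring
    _ = a0 ν := by rw [h1, one_mul]

end Aux

/-- There is exactly one sequence `a : ℕ → R` with `a 0 = 1` and
`u_ν · a_ν = a_{ν−1}` for all `ν ≥ 1`, and it satisfies
`(∏_{m=1}^{ν} u_m) · a_ν = 1` for every `ν`. This is the coefficient-level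
form of the identity `J^T_{ℙⁿ} = I^T_{ℙⁿ}`. -/
theorem stmt5 (n : ℕ) :
    (∃! a : ℕ → Requiv n,
      a 0 = 1 ∧ ∀ ν : ℕ, 1 ≤ ν → uElt n ν * a ν = a (ν - 1)) ∧
    (∀ a : ℕ → Requiv n,
      (a 0 = 1 ∧ ∀ ν : ℕ, 1 ≤ ν → uElt n ν * a ν = a (ν - 1)) →
      ∀ ν : ℕ, (∏ m ∈ Finset.Icc 1 ν, uElt n m) * a ν = 1) :=
  abstract_rec (uElt n) (uElt_inv n)
end
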